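/- arXiv:math/0112153 — 9 statements merged into one kernel-verified Lean document; each statement's English description precedes it below -/
import Mathlib

section
/- Let $\Gamma$ be a topological abelian group and $\omega = (\omega_1, \omega_2, \ldots)$ a sequence in $\Gamma$. Let $X \subset \Gamma$ be an $\omega$-invariant set (i.e., $X$ is closed and $X + \omega_i \subset X$ for all $i$), and let $X^{(\infty)}$ be a closed set with $H_X \subset X^{(\infty)} \subset X$, where $H_X = \overline{X \setminus \bigcup_{i=1}^\infty (X+\omega_i)} \cup \bigcap_{n=1}^\infty \overline{\bigcup_{i=n}^\infty (X+\omega_i)}$. Define $X^{(n)} = X^{(\infty)} \cup \bigcup_{i=n+1}^\infty (X+\omega_i)$ for $n \in \mathbb{N}$. Then $X^{(n)}$ is closed for all $n$. -/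
/-! Each translate `X + ω_i` is closed, so a limit point of `⋃_{i > n} (X + ω_i)` outside this union
lies in the closure of every tail `⋃_{i ≥ m} (X + ω_i)` (the finitely many translates between
the two tails have a closed union), hence in `H_X ⊆ X^∞`. -/

open Set Filter Topology

variable {Γ : Type*}

/-- The translate `X + g` of a set. -/
def trSet [Add Γ] (X : Set Γ) (g : Γ) : Set Γ := (fun x => x + g) '' X

/-- `X` is ω-invariant: closed and `X + ω i ⊆ X` for all `i ≥ 1`. -/
def OmegaInv [Add Γ] [TopologicalSpace Γ] (ω : ℕ → Γ) (X : Set Γ) : Prop :=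
  IsClosed X ∧ ∀ i, 1 ≤ i → trSet X (ω i) ⊆ X

/-- The set `H_X`. -/
def HX [Add Γ] [TopologicalSpace Γ] (ω : ℕ → Γ) (X : Set Γ) : Set Γ :=
  closure (X \ ⋃ i ≥ 1, trSet X (ω i)) ∪
    ⋂ n ≥ 1, closure (⋃ i ≥ n, trSet X (ω i))

/-- An ω-invariant pair `(X, X^∞)`. -/
def OmegaInvPair [Add Γ] [TopologicalSpace Γ] (ω : ℕ → Γ) (X Xinf : Set Γ) : Prop :=
  OmegaInv ω X ∧ IsClosed Xinf ∧ HX ω X ⊆ Xinf ∧ Xinf ⊆ X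

/-- The set `X^{(n)} = X^∞ ∪ ⋃_{i ≥ n+1} (X + ω_i)`. -/
def Xn [Add Γ] [TopologicalSpace Γ] (ω : ℕ → Γ) (X Xinf : Set Γ) (n : ℕ) : Set Γ :=
  Xinf ∪ ⋃ i ≥ n + 1, trSet X (ω i)

/-- A word: a finite list of positive integers. -/
def IsWord (μ : List ℕ) : Prop := ∀ i ∈ μ, 1 ≤ i

/-- A word with letters in `{1, …, n}`. -/
def IsWordLe (n : ℕ) (μ : List ℕ) : Prop := ∀ i ∈ μ, 1 ≤ i ∧ i ≤ n

/-- `ω_μ`, the sum of `ω i` over the letters of `μ`. -/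
def wsum [AddCommMonoid Γ] (ω : ℕ → Γ) (μ : List ℕ) : Γ := (μ.map ω).sum

/-- The semigroup (with 0) generated by the `ω_i`. -/
def sgSet [AddCommMonoid Γ] (ω : ℕ → Γ) : Set Γ :=
  {γ | ∃ μ : List ℕ, IsWord μ ∧ γ = wsum ω μ}

/-- Primeness condition for an ω-invariant set. -/
def PrimeCond [Add Γ] [TopologicalSpace Γ] (ω : ℕ → Γ) (X : Set Γ) : Prop :=
  ∀ X1 X2 : Set Γ, OmegaInv ω X1 → OmegaInv ω X2 → X ⊆ X1 ∪ X2 → X ⊆ X1 ∨ X ⊆ X2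

/-- Primeness condition for an ω-invariant pair (componentwise inclusion/union). -/
def PrimePair [Add Γ] [TopologicalSpace Γ] (ω : ℕ → Γ) (X Xinf : Set Γ) : Prop :=
  ∀ X1 X1i X2 X2i : Set Γ, OmegaInvPair ω X1 X1i → OmegaInvPair ω X2 X2i →
    X ⊆ X1 ∪ X2 → Xinf ⊆ X1i ∪ X2i →
    (X ⊆ X1 ∧ Xinf ⊆ X1i) ∨ (X ⊆ X2 ∧ Xinf ⊆ X2i)

lemma IsClosed.trSet [AddGroup Γ] [TopologicalSpace Γ] [IsTopologicalAddGroup Γ] {X : Set Γ}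
    (hX : IsClosed X) (g : Γ) : IsClosed (trSet X g) :=
  (Homeomorph.addRight g).isClosedMap X hX

lemma closure_biUnion_ge_subset {α : Type*} [TopologicalSpace α] {T : ℕ → Set α}
    (hT : ∀ i, IsClosed (T i)) (n : ℕ) :
    closure (⋃ i ≥ n, T i) ⊆ (⋃ i ≥ n, T i) ∪ ⋂ m, closure (⋃ i ≥ m, T i) := by
  intro x hx
  by_cases hxT : x ∈ ⋃ i ≥ n, T i
  · exact Or.inl hxT
  refine Or.inr (mem_iInter.2 fun m => ?_)
  have hsplit : (⋃ i ≥ n, T i) ⊆ (⋃ i ∈ Ico n m, T i) ∪ ⋃ i ≥ m, T i := by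
    simp only [iUnion₂_subset_iff]
    intro i hi
    rcases lt_or_ge i m with him | him
    · exact subset_union_left.trans' (subset_biUnion_of_mem (u := T) ⟨hi, him⟩)
    · exact subset_union_right.trans' (subset_biUnion_of_mem (u := T) him)
  have hfin : IsClosed (⋃ i ∈ Ico n m, T i) := (finite_Ico n m).isClosed_biUnion fun i _ => hT i
  have hx' := closure_mono hsplit hx
  rw [closure_union, hfin.closure_eq] at hx'
  rcases hx' with hxfin | hxtail
  · exact absurd (biUnion_mono Ico_subset_Ici_self (fun _ _ => le_rfl) hxfin) hxT
  · exact hxtail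

theorem stmt0_general [AddCommGroup Γ] [TopologicalSpace Γ] [IsTopologicalAddGroup Γ]
    (ω : ℕ → Γ) (X Xinf : Set Γ) (h : OmegaInvPair ω X Xinf) :
    ∀ n : ℕ, IsClosed (Xn ω X Xinf n) := by
  obtain ⟨⟨hX, -⟩, hXinf, hHX, -⟩ := h
  intro n
  have htails : (⋂ m, closure (⋃ i ≥ m, trSet X (ω i))) ⊆ Xinf := fun x hx =>
    hHX (Or.inr (mem_iInter₂.2 fun m _ => mem_iInter.1 hx m))
  refine isClosed_of_closure_subset ?_
  rw [Xn, closure_union, hXinf.closure_eq]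
  refine union_subset subset_union_left ?_
  refine (closure_biUnion_ge_subset (fun i => hX.trSet (ω i)) (n + 1)).trans ?_
  exact union_subset subset_union_right (htails.trans subset_union_left)

theorem stmt0 [AddCommGroup Γ] [TopologicalSpace Γ] [IsTopologicalAddGroup Γ]
    [LocallyCompactSpace Γ] [SecondCountableTopology Γ] [T2Space Γ]
    (ω : ℕ → Γ) (X Xinf : Set Γ) (h : OmegaInvPair ω X Xinf) :
    ∀ n : ℕ, IsClosed (Xn ω X Xinf n) :=
  stmt0_general ω X Xinf h
end

section
/- Let $(X, X^{(\infty)})$ be an $\omega$-invariant pair with $X^{(n)} = X^{(\infty)} \cup \bigcup_{i=n+1}^\infty (X+\omega_i)$. For any positive integer $n$, $X = \bigcup_{\mu \in \mathcal{W}_n} (X^{(n)} + \omega_\mu) \cup \bigcap_{k=1}^\infty \big( \bigcup_{\mu \in \mathcal{W}_n^{(k)}} (X + \omega_\mu) \big)$, where $\mathcal{W}_n^{(k)}$ is the set of words of length $k$ in $\{1,\ldots,n\}$, $\mathcal{W}_n = \bigcup_{k \geq 0} \mathcal{W}_n^{(k)}$, and $\omega_\mu = \sum_{j=1}^{|\mu|}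 \omega_{i_j}$ for $\mu = (i_1,\ldots,i_k)$. -/
open Set Filter Topology

variable {Γ : Type*}

/-!
A point of `X` outside `X^{(n)}` is not in `X^∞ ⊇ closure (X \ ⋃ᵢ (X + ω_i))`, so it is a translate
`y + ω_i` with `y ∈ X` and `i ≤ n`. Applying this `k` times to the base point, every point of `X`
lies either in `X^{(n)} + ω_μ` for some word `μ` of length `< k`, or in `X + ω_μ` with `|μ| = k`.
The reverse inclusion is the ω-invariance `X + ω_μ ⊆ X`.
-/

section Translates

lemma add_mem_trSet [Add Γ] {X : Set Γ} {x : Γ} (hx : x ∈ X) (g : Γ) : x + g ∈ trSet X g :=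
  mem_image_of_mem _ hx

lemma trSet_mono [Add Γ] {X Y : Set Γ} (hXY : X ⊆ Y) (g : Γ) : trSet X g ⊆ trSet Y g :=
  image_mono hXY

lemma trSet_trSet [AddSemigroup Γ] (X : Set Γ) (a b : Γ) :
    trSet (trSet X a) b = trSet X (a + b) := by
  simp only [trSet, image_image, add_assoc]

end Translates

section Words

lemma wsum_nil [AddCommMonoid Γ] (ω : ℕ → Γ) : wsum ω [] = 0 := rfl

lemma wsum_cons [AddCommMonoid Γ] (ω : ℕ → Γ) (i : ℕ) (μ : List ℕ) :
    wsum ω (i :: μ) = ω i + wsum ω μ := by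
  simp [wsum]

lemma IsWordLe.isWord {n : ℕ} {μ : List ℕ} (hμ : IsWordLe n μ) : IsWord μ :=
  fun i hi => (hμ i hi).1

lemma IsWordLe.cons {n i : ℕ} {μ : List ℕ} (hi : 1 ≤ i ∧ i ≤ n) (hμ : IsWordLe n μ) :
    IsWordLe n (i :: μ) := by
  intro j hj
  rcases List.mem_cons.1 hj with rfl | hj
  exacts [hi, hμ j hj]

lemma trSet_wsum_subset [AddCommMonoid Γ] {ω : ℕ → Γ} {X : Set Γ}
    (hX : ∀ i, 1 ≤ i → trSet X (ω i) ⊆ X) {μ : List ℕ} (hμ : IsWord μ) :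
    trSet X (wsum ω μ) ⊆ X := by
  induction μ with
  | nil => simp [wsum_nil, trSet]
  | cons i μ ih =>
    rw [wsum_cons, ← trSet_trSet]
    exact (trSet_mono (hX i (hμ i List.mem_cons_self)) _).trans
      (ih fun j hj => hμ j (List.mem_cons_of_mem i hj))

end Words

section Decomposition

variable [AddCommMonoid Γ] [TopologicalSpace Γ] {ω : ℕ → Γ} {X Xinf : Set Γ}

lemma OmegaInvPair.Xn_subset (h : OmegaInvPair ω X Xinf) (n : ℕ) : Xn ω X Xinf n ⊆ X :=
  union_subset h.2.2.2 <| iUnion₂_subset fun i hi => h.1.2 i (by omega)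

lemma subset_Xn_union (hH : HX ω X ⊆ Xinf) (n : ℕ) :
    X ⊆ Xn ω X Xinf n ∪ ⋃ i, ⋃ _ : 1 ≤ i ∧ i ≤ n, trSet X (ω i) := by
  intro x hx
  by_contra hout
  simp only [Xn, mem_union, mem_iUnion, not_or, not_exists] at hout
  obtain ⟨⟨hxinf, hlarge⟩, hsmall⟩ := hout
  have hfree : x ∉ ⋃ i ≥ 1, trSet X (ω i) := by
    simp only [mem_iUnion, not_exists]
    intro i hi hxi
    rcases le_or_gt i n with hin | hin
    exacts [hsmall i ⟨hi, hin⟩ hxi, hlarge i hin hxi]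
  exact hxinf (hH (Or.inl (subset_closure ⟨hx, hfree⟩)))

lemma translates_words_length_subset_succ (hH : HX ω X ⊆ Xinf) (n k : ℕ) :
    (⋃ μ : List ℕ, ⋃ _ : IsWordLe n μ ∧ μ.length = k, trSet X (wsum ω μ)) ⊆
      (⋃ μ : List ℕ, ⋃ _ : IsWordLe n μ, trSet (Xn ω X Xinf n) (wsum ω μ)) ∪
        ⋃ μ : List ℕ, ⋃ _ : IsWordLe n μ ∧ μ.length = k + 1, trSet X (wsum ω μ) := by
  simp only [iUnion_subset_iff, and_imp]
  rintro μ hμ rfl _ ⟨y, hy, rfl⟩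
  rcases subset_Xn_union hH n hy with hyn | hyi
  · exact Or.inl (mem_iUnion₂.2 ⟨μ, hμ, add_mem_trSet hyn _⟩)
  · obtain ⟨i, hi, hyi⟩ := mem_iUnion₂.1 hyi
    have hshift : y + wsum ω μ ∈ trSet X (wsum ω (i :: μ)) := by
      rw [wsum_cons, ← trSet_trSet]
      exact add_mem_trSet hyi _
    exact Or.inr (mem_iUnion₂.2 ⟨i :: μ, ⟨hμ.cons hi, rfl⟩, hshift⟩)

lemma subset_Xn_translates_union_words_length (hH : HX ω X ⊆ Xinf) (n k : ℕ) :
    X ⊆ (⋃ μ : List ℕ, ⋃ _ : IsWordLe n μ, trSet (Xn ω X Xinf n) (wsum ω μ)) ∪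
        ⋃ μ : List ℕ, ⋃ _ : IsWordLe n μ ∧ μ.length = k, trSet X (wsum ω μ) := by
  induction k with
  | zero =>
    intro x hx
    refine Or.inr (mem_iUnion₂.2 ⟨[], ⟨fun i hi => by simp at hi, rfl⟩, ?_⟩)
    simpa [wsum_nil, trSet] using hx
  | succ k ih =>
    exact ih.trans <| union_subset subset_union_left
      (translates_words_length_subset_succ hH n k)

end Decomposition

theorem stmt2_general [AddCommGroup Γ] [TopologicalSpace Γ]
    (ω : ℕ → Γ) (X Xinf : Set Γ) (h : OmegaInvPair ω X Xinf) (n : ℕ) :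
    X = (⋃ μ : List ℕ, ⋃ _ : IsWordLe n μ, trSet (Xn ω X Xinf n) (wsum ω μ)) ∪
      ⋂ k ≥ 1, ⋃ μ : List ℕ, ⋃ _ : IsWordLe n μ ∧ μ.length = k, trSet X (wsum ω μ) := by
  refine Subset.antisymm (fun x hx => ?_) (union_subset ?_ ?_)
  · by_cases hall : x ∈ ⋂ k ≥ 1,
        ⋃ μ : List ℕ, ⋃ _ : IsWordLe n μ ∧ μ.length = k, trSet X (wsum ω μ)
    · exact Or.inr hall
    · obtain ⟨k, -, hk⟩ : ∃ k ≥ 1, x ∉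
          ⋃ μ : List ℕ, ⋃ _ : IsWordLe n μ ∧ μ.length = k, trSet X (wsum ω μ) := by
        simpa using hall
      exact Or.inl ((subset_Xn_translates_union_words_length h.2.2.1 n k hx).resolve_right hk)
  · exact iUnion₂_subset fun μ hμ =>
      (trSet_mono (h.Xn_subset n) _).trans (trSet_wsum_subset h.1.2 hμ.isWord)
  · exact (biInter_subset_of_mem (le_refl 1)).trans <| iUnion₂_subset fun μ hμ =>
      trSet_wsum_subset h.1.2 hμ.1.isWord

theorem stmt2 [AddCommGroup Γ] [TopologicalSpace Γ] [IsTopologicalAddGroup Γ]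
    [LocallyCompactSpace Γ] [SecondCountableTopology Γ] [T2Space Γ]
    (ω : ℕ → Γ) (X Xinf : Set Γ) (h : OmegaInvPair ω X Xinf) (n : ℕ) (hn : 1 ≤ n) :
    X = (⋃ μ : List ℕ, ⋃ _ : IsWordLe n μ, trSet (Xn ω X Xinf n) (wsum ω μ)) ∪
      ⋂ k ≥ 1, ⋃ μ : List ℕ, ⋃ _ : IsWordLe n μ ∧ μ.length = k, trSet X (wsum ω μ) :=
  stmt2_general ω X Xinf h n
end

section
/- For any $\gamma \in \Gamma$, the set $\gamma + \overline{\mathrm{sg}}(\omega)$ is a prime $\omega$-invariant set, where an $\omega$-invariant set $X$ is prime if whenever $X_1, X_2$ are $\omega$-invariant sets with $X \subset X_1 \cup X_2$, either $X \subset X_1$ or $X \subset X_2$. -/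
open Set Filter Topology

variable {Γ : Type*}

/-! Any ω-invariant set containing `γ` contains `γ + sg(ω)` and, being closed, its closure.
Hence whichever of `X₁`, `X₂` contains the point `γ = γ + 0` contains all of `γ + closure (sg ω)`. -/

section AddCommMonoid

variable [AddCommMonoid Γ]

lemma zero_mem_sgSet (ω : ℕ → Γ) : (0 : Γ) ∈ sgSet ω :=
  ⟨[], by simp [IsWord], by simp [wsum]⟩

lemma add_mem_sgSet {ω : ℕ → Γ} {g : Γ} (hg : g ∈ sgSet ω) {i : ℕ} (hi : 1 ≤ i) :
    g + ω i ∈ sgSet ω := by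
  obtain ⟨μ, hμ, rfl⟩ := hg
  refine ⟨i :: μ, ?_, by simp [wsum, add_comm]⟩
  simpa [IsWord, hi] using hμ

lemma add_wsum_mem_of_invariant {ω : ℕ → Γ} {X : Set Γ}
    (hX : ∀ i, 1 ≤ i → trSet X (ω i) ⊆ X) {γ : Γ} (hγ : γ ∈ X) :
    ∀ μ, IsWord μ → γ + wsum ω μ ∈ X := by
  intro μ hμ
  induction μ with
  | nil => simpa [wsum] using hγ
  | cons i μ ih =>
    have hi : 1 ≤ i := hμ i List.mem_cons_self
    have hstep : (γ + wsum ω μ) + ω i ∈ X :=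
      hX i hi ⟨_, ih fun j hj => hμ j (List.mem_cons_of_mem i hj), rfl⟩
    have hsplit : γ + wsum ω (i :: μ) = (γ + wsum ω μ) + ω i := by
      simp only [wsum, List.map_cons, List.sum_cons]
      abel
    rw [hsplit]
    exact hstep

variable [TopologicalSpace Γ] [ContinuousAdd Γ]

lemma OmegaInv.image_add_closure_sgSet_subset {ω : ℕ → Γ} {X : Set Γ} (hX : OmegaInv ω X)
    {γ : Γ} (hγ : γ ∈ X) : (fun s => γ + s) '' closure (sgSet ω) ⊆ X := by
  have hmaps : MapsTo (fun s => γ + s) (sgSet ω) X := by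
    rintro _ ⟨μ, hμ, rfl⟩
    exact add_wsum_mem_of_invariant hX.2 hγ μ hμ
  rw [image_subset_iff, ← hX.1.closure_eq]
  exact hmaps.closure (continuous_const_add γ)

lemma add_mem_closure_sgSet {ω : ℕ → Γ} {g : Γ} (hg : g ∈ closure (sgSet ω)) {i : ℕ}
    (hi : 1 ≤ i) : g + ω i ∈ closure (sgSet ω) :=
  MapsTo.closure (fun _ hs => add_mem_sgSet hs hi) (continuous_add_const (ω i)) hg

end AddCommMonoid

lemma primeCond_of_mem_of_forall_subset [Add Γ] [TopologicalSpace Γ] {ω : ℕ → Γ}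
    {X : Set Γ} {γ : Γ} (hγ : γ ∈ X) (hmin : ∀ Y, OmegaInv ω Y → γ ∈ Y → X ⊆ Y) :
    PrimeCond ω X := by
  intro X₁ X₂ h₁ h₂ hX
  exact (hX hγ).imp (hmin X₁ h₁) (hmin X₂ h₂)

lemma omegaInv_image_add_closure_sgSet [AddCommGroup Γ] [TopologicalSpace Γ]
    [IsTopologicalAddGroup Γ] (ω : ℕ → Γ) (γ : Γ) :
    OmegaInv ω ((fun s => γ + s) '' closure (sgSet ω)) := by
  refine ⟨(Homeomorph.addLeft γ).isClosedMap _ isClosed_closure, fun i hi => ?_⟩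
  rintro _ ⟨_, ⟨c, hc, rfl⟩, rfl⟩
  exact ⟨c + ω i, add_mem_closure_sgSet hc hi, (add_assoc γ c (ω i)).symm⟩

theorem stmt4_general [AddCommGroup Γ] [TopologicalSpace Γ] [IsTopologicalAddGroup Γ]
    (ω : ℕ → Γ) (γ : Γ) :
    OmegaInv ω ((fun s => γ + s) '' closure (sgSet ω)) ∧
      PrimeCond ω ((fun s => γ + s) '' closure (sgSet ω)) := by
  have hγ : γ ∈ (fun s => γ + s) '' closure (sgSet ω) :=
    ⟨0, subset_closure (zero_mem_sgSet ω), add_zero γ⟩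
  exact ⟨omegaInv_image_add_closure_sgSet ω γ,
    primeCond_of_mem_of_forall_subset hγ fun _ hY hγY => hY.image_add_closure_sgSet_subset hγY⟩

theorem stmt4 [AddCommGroup Γ] [TopologicalSpace Γ] [IsTopologicalAddGroup Γ]
    [LocallyCompactSpace Γ] [SecondCountableTopology Γ] [T2Space Γ]
    (ω : ℕ → Γ) (γ : Γ) :
    OmegaInv ω ((fun s => γ + s) '' closure (sgSet ω)) ∧
      PrimeCond ω ((fun s => γ + s) '' closure (sgSet ω)) :=
  stmt4_general ω γ
end

section
/- If an $\omega$-invariant pair $(X, X^{(\infty)})$ is prime, then either $X^{(\infty)} = H_X$ or $X^{(\infty)} = H_X \cup \{\gamma\}$ for some single point $\gamma \notin H_X$. -/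
open Set Filter Topology

variable {Γ : Type*}

/-! Removing from `X^∞` an open set disjoint from the closed set `H_X` leaves an ω-invariant
pair. Two distinct points of `X^∞ \ H_X`, separated by disjoint open sets, therefore split
`(X, X^∞)` into two pairs whose union contains it while neither does, contradicting primality. -/

theorem isClosed_HX [Add Γ] [TopologicalSpace Γ] (ω : ℕ → Γ) (X : Set Γ) :
    IsClosed (HX ω X) :=
  isClosed_closure.union (isClosed_biInter fun _ _ => isClosed_closure)

theorem OmegaInvPair.diff_open [Add Γ] [TopologicalSpace Γ] {ω : ℕ → Γ} {X Xinf U : Set Γ}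
    (h : OmegaInvPair ω X Xinf) (hU : IsOpen U) (hUH : Disjoint U (HX ω X)) :
    OmegaInvPair ω X (Xinf \ U) :=
  ⟨h.1, h.2.1.sdiff hU, subset_sdiff.2 ⟨h.2.2.1, hUH.symm⟩, sdiff_subset.trans h.2.2.2⟩

theorem PrimePair.subsingleton_diff_HX [Add Γ] [TopologicalSpace Γ] [T2Space Γ]
    {ω : ℕ → Γ} {X Xinf : Set Γ} (h : OmegaInvPair ω X Xinf) (hp : PrimePair ω X Xinf) :
    (Xinf \ HX ω X).Subsingleton := by
  intro γ₁ hγ₁ γ₂ hγ₂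
  by_contra hne
  obtain ⟨V₁, V₂, hV₁, hV₂, hγ₁V, hγ₂V, hV⟩ := t2_separation hne
  have hH := isClosed_HX ω X
  have pair₁ := h.diff_open (hV₁.sdiff hH) disjoint_sdiff_left
  have pair₂ := h.diff_open (hV₂.sdiff hH) disjoint_sdiff_left
  have hcover : Xinf ⊆ (Xinf \ (V₁ \ HX ω X)) ∪ (Xinf \ (V₂ \ HX ω X)) := by
    rw [← sdiff_inter, (hV.mono sdiff_subset sdiff_subset).inter_eq, sdiff_empty]
  rcases hp X _ X _ pair₁ pair₂ subset_union_left hcover with ⟨-, hi⟩ | ⟨-, hi⟩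
  · exact (hi hγ₁.1).2 ⟨hγ₁V, hγ₁.2⟩
  · exact (hi hγ₂.1).2 ⟨hγ₂V, hγ₂.2⟩

theorem Set.eq_or_eq_union_singleton_of_subsingleton_diff {α : Type*} {H A : Set α}
    (hHA : H ⊆ A) (hA : (A \ H).Subsingleton) : A = H ∨ ∃ a ∉ H, A = H ∪ {a} := by
  rcases hA.eq_empty_or_singleton with he | ⟨a, ha⟩
  · exact Or.inl ((sdiff_eq_empty.1 he).antisymm hHA)
  · have haA : a ∈ A \ H := ha ▸ mem_singleton a
    exact Or.inr ⟨a, haA.2, by rw [← ha, union_sdiff_cancel hHA]⟩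

theorem stmt6_general [AddCommGroup Γ] [TopologicalSpace Γ] [T2Space Γ]
    (ω : ℕ → Γ) (X Xinf : Set Γ) (h : OmegaInvPair ω X Xinf)
    (hp : PrimePair ω X Xinf) :
    Xinf = HX ω X ∨ ∃ γ : Γ, γ ∉ HX ω X ∧ Xinf = HX ω X ∪ {γ} :=
  Set.eq_or_eq_union_singleton_of_subsingleton_diff h.2.2.1 (hp.subsingleton_diff_HX h)

theorem stmt6 [AddCommGroup Γ] [TopologicalSpace Γ] [IsTopologicalAddGroup Γ]
    [LocallyCompactSpace Γ] [SecondCountableTopology Γ] [T2Space Γ]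
    (ω : ℕ → Γ) (X Xinf : Set Γ) (h : OmegaInvPair ω X Xinf)
    (hp : PrimePair ω X Xinf) :
    Xinf = HX ω X ∨ ∃ γ : Γ, γ ∉ HX ω X ∧ Xinf = HX ω X ∪ {γ} :=
  stmt6_general ω X Xinf h hp
end

section
/- Under the assumptions of the previous setting (smallest $K \geq 1$ with $K\omega_1 = 0$, and no sequence of nonempty words $\mu_k$ with first letter $\neq 1$ and $\omega_{\mu_k} \to 0$), for any $\gamma_0 \in \Gamma$ there exists a compact neighborhood $X$ of $\gamma_0$ such that $X \cap (X + \gamma) = \emptyset$ for every $\gamma \in \overline{\mathrm{sg}}(\omega) \setminus \{0\}$. -/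
/-!
Split a nonzero element `ω_μ` of `sg(ω)` according to its word: if every letter is `1` it is a
nonzero multiple of `ω_1`, and these form a finite set since `ω_1` has finite order; otherwise a
letter `≠ 1` can be moved to the front. The hypothesis on sequences keeps `0` out of the closure of
the second kind of sums, so `0 ∉ closure (sg(ω) \ {0})`. Choosing `X` so small that all differences
of its points avoid this closed set gives `X ∩ (X + γ) = ∅`.
-/

open Set Filter Topology

variable {Γ : Type*}

def headNeOneSums [AddCommMonoid Γ] (ω : ℕ → Γ) : Set Γ :=
  {γ | ∃ μ : List ℕ, IsWord μ ∧ μ ≠ [] ∧ μ.head? ≠ some 1 ∧ wsum ω μ = γ}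

lemma wsum_mem_multiples_or_headNeOneSums [AddCommMonoid Γ] (ω : ℕ → Γ) {μ : List ℕ}
    (hμ : IsWord μ) :
    wsum ω μ ∈ AddSubmonoid.multiples (ω 1) ∨ wsum ω μ ∈ headNeOneSums ω := by
  by_cases hone : ∀ i ∈ μ, i = 1
  · have hrep : μ = List.replicate μ.length 1 := List.eq_replicate_iff.2 ⟨rfl, hone⟩
    refine Or.inl ⟨μ.length, ?_⟩
    conv_rhs => rw [hrep]
    simp [wsum, List.map_replicate, List.sum_replicate]
  · obtain ⟨a, ha, ha1⟩ : ∃ a ∈ μ, a ≠ 1 := by simpa using hone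
    have hperm := List.perm_cons_erase ha
    exact Or.inr ⟨a :: μ.erase a, fun i hi => hμ i (hperm.mem_iff.2 hi), List.cons_ne_nil _ _,
      by simpa using ha1, ((hperm.map ω).sum_eq).symm⟩

lemma zero_notMem_closure_headNeOneSums [AddCommMonoid Γ] [TopologicalSpace Γ]
    [FrechetUrysohnSpace Γ] (ω : ℕ → Γ)
    (hnoseq : ¬ ∃ μ : ℕ → List ℕ,
      (∀ k, IsWord (μ k) ∧ μ k ≠ [] ∧ (μ k).head? ≠ some 1) ∧
        Tendsto (fun k => wsum ω (μ k)) atTop (𝓝 0)) :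
    (0 : Γ) ∉ closure (headNeOneSums ω) := by
  intro h0
  obtain ⟨x, hx, hlim⟩ := mem_closure_iff_seq_limit.1 h0
  choose μ hword hne hhead hsum using hx
  exact hnoseq ⟨μ, fun k => ⟨hword k, hne k, hhead k⟩, by simpa only [hsum] using hlim⟩

lemma zero_notMem_closure_sgSet_diff_zero [AddCommMonoid Γ] [TopologicalSpace Γ] [T1Space Γ]
    [FrechetUrysohnSpace Γ] (ω : ℕ → Γ) (hω1 : IsOfFinAddOrder (ω 1))
    (hnoseq : ¬ ∃ μ : ℕ → List ℕ,
      (∀ k, IsWord (μ k) ∧ μ k ≠ [] ∧ (μ k).head? ≠ some 1) ∧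
        Tendsto (fun k => wsum ω (μ k)) atTop (𝓝 0)) :
    (0 : Γ) ∉ closure (sgSet ω \ {0}) := by
  have hsplit : sgSet ω \ {0} ⊆
      ((AddSubmonoid.multiples (ω 1) : Set Γ) \ {0}) ∪ headNeOneSums ω := by
    rintro _ ⟨⟨μ, hμ, rfl⟩, hne⟩
    rcases wsum_mem_multiples_or_headNeOneSums ω hμ with h | h
    exacts [Or.inl ⟨h, hne⟩, Or.inr h]
  have hclosed : IsClosed ((AddSubmonoid.multiples (ω 1) : Set Γ) \ {0}) :=
    hω1.finite_multiples.sdiff.isClosed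
  intro h0
  have h := closure_mono hsplit h0
  rw [closure_union, hclosed.closure_eq] at h
  rcases h with h | h
  · exact h.2 rfl
  · exact zero_notMem_closure_headNeOneSums ω hnoseq h

lemma closure_diff_singleton_subset {α : Type*} [TopologicalSpace α] [T1Space α] (s : Set α)
    (a : α) : closure s \ {a} ⊆ closure (s \ {a}) := by
  rintro x ⟨hx, hxa⟩
  have : closure s ⊆ closure (s \ {a}) ∪ {a} :=
    calc closure s ⊆ closure (s \ {a} ∪ {a}) := closure_mono (by simp)
      _ = closure (s \ {a}) ∪ {a} := by rw [closure_union, closure_singleton]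
  exact (this hx).resolve_right hxa

lemma exists_isCompact_mem_nhds_inter_trSet_eq_empty [AddGroup Γ] [TopologicalSpace Γ]
    [IsTopologicalAddGroup Γ] [LocallyCompactSpace Γ] {C : Set Γ} (hC : IsClosed C)
    (h0 : (0 : Γ) ∉ C) (γ0 : Γ) :
    ∃ X : Set Γ, IsCompact X ∧ X ∈ 𝓝 γ0 ∧ ∀ γ ∈ C, X ∩ trSet X γ = ∅ := by
  have hdiff : (fun p : Γ × Γ => -p.2 + p.1) ⁻¹' Cᶜ ∈ 𝓝 (γ0, γ0) :=
    (continuous_snd.neg.add continuous_fst).continuousAt.preimage_mem_nhds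
      (by simpa using hC.isOpen_compl.mem_nhds h0)
  rw [nhds_prod_eq, mem_prod_self_iff] at hdiff
  obtain ⟨U, hU, hUU⟩ := hdiff
  obtain ⟨X, hX, hXU, hXc⟩ := local_compact_nhds hU
  refine ⟨X, hXc, hX, fun γ hγ => eq_empty_iff_forall_notMem.2 ?_⟩
  rintro _ ⟨hx, y, hy, rfl⟩
  exact (hUU (mk_mem_prod (hXU hx) (hXU hy)) : -y + (y + γ) ∈ Cᶜ) (by simpa using hγ)

theorem stmt11_general [AddCommGroup Γ] [TopologicalSpace Γ] [IsTopologicalAddGroup Γ]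
    [LocallyCompactSpace Γ] [SecondCountableTopology Γ] [T2Space Γ]
    (ω : ℕ → Γ) (K : ℕ) (hK : 1 ≤ K) (hK0 : K • ω 1 = 0)
    (hnoseq : ¬ ∃ μ : ℕ → List ℕ,
      (∀ k, IsWord (μ k) ∧ μ k ≠ [] ∧ (μ k).head? ≠ some 1) ∧
        Tendsto (fun k => wsum ω (μ k)) atTop (𝓝 0)) :
    ∀ γ0 : Γ, ∃ X : Set Γ, IsCompact X ∧ X ∈ 𝓝 γ0 ∧
      ∀ γ ∈ closure (sgSet ω) \ {0}, X ∩ trSet X γ = ∅ := by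
  intro γ0
  have hω1 : IsOfFinAddOrder (ω 1) := isOfFinAddOrder_iff_nsmul_eq_zero.2 ⟨K, hK, hK0⟩
  obtain ⟨X, hXc, hX, hdisj⟩ := exists_isCompact_mem_nhds_inter_trSet_eq_empty isClosed_closure
    (zero_notMem_closure_sgSet_diff_zero ω hω1 hnoseq) γ0
  exact ⟨X, hXc, hX, fun γ hγ => hdisj γ (closure_diff_singleton_subset _ _ hγ)⟩

theorem stmt11 [AddCommGroup Γ] [TopologicalSpace Γ] [IsTopologicalAddGroup Γ]
    [LocallyCompactSpace Γ] [SecondCountableTopology Γ] [T2Space Γ]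
    (ω : ℕ → Γ) (K : ℕ) (hK : 1 ≤ K) (hK0 : K • ω 1 = 0)
    (hmin : ∀ m : ℕ, 1 ≤ m → m • ω 1 = 0 → K ≤ m)
    (hnoseq : ¬ ∃ μ : ℕ → List ℕ,
      (∀ k, IsWord (μ k) ∧ μ k ≠ [] ∧ (μ k).head? ≠ some 1) ∧
        Tendsto (fun k => wsum ω (μ k)) atTop (𝓝 0)) :
    ∀ γ0 : Γ, ∃ X : Set Γ, IsCompact X ∧ X ∈ 𝓝 γ0 ∧
      ∀ γ ∈ closure (sgSet ω) \ {0}, X ∩ trSet X γ = ∅ :=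
  stmt11_general ω K hK hK0 hnoseq
end

section
/- Suppose $K\omega_1 = 0$ for the smallest positive integer $K$, and there is no sequence of nonempty words $\mu_k$ (in positive integers) with first letter $\neq 1$ such that $\omega_{\mu_k} \to 0$. Then for any $\gamma \in \Gamma$, $\gamma \notin H_{\gamma + \overline{\mathrm{sg}}(\omega)}$. -/
open Set Filter Topology

variable {Γ : Type*}

/-!
Since `K • ω 1 = 0`, `sg(ω) ⊆ sg(ω) + ω 1`, so `X = γ + closure sg(ω)` satisfies
`X ⊆ X + ω 1` and the first part of `H_X` is empty. A point of the second part lies in the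
closure of `⋃ i ≥ 2, X + ω i ⊆ γ + closure (⋃ i ≥ 2, sg(ω) + ω i)`; for `γ` itself this puts `0`
in the closure of the sums `ω_μ` of words with first letter `≠ 1`, and a sequence of such words
converging to `0` is excluded by hypothesis.
-/

section Words

variable [AddCommMonoid Γ] {ω : ℕ → Γ}

lemma add_nsmul_mem_sgSet {s : Γ} (hs : s ∈ sgSet ω) (m : ℕ) : s + m • ω 1 ∈ sgSet ω := by
  obtain ⟨μ, hμ, rfl⟩ := hs
  refine ⟨μ ++ List.replicate m 1, fun i hi => ?_, by simp [wsum, List.sum_replicate]⟩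
  rcases List.mem_append.1 hi with h | h
  · exact hμ i h
  · simp [List.eq_of_mem_replicate h]

lemma sgSet_subset_trSet {K : ℕ} (hK : 1 ≤ K) (hK0 : K • ω 1 = 0) :
    sgSet ω ⊆ trSet (sgSet ω) (ω 1) := fun t ht => by
  refine ⟨t + (K - 1) • ω 1, add_nsmul_mem_sgSet ht _, ?_⟩
  show t + (K - 1) • ω 1 + ω 1 = t
  rw [add_assoc, ← succ_nsmul, Nat.sub_add_cancel hK, hK0, add_zero]

lemma exists_word_of_mem_biUnion_trSet_sgSet {x : Γ} (hx : x ∈ ⋃ i ≥ 2, trSet (sgSet ω) (ω i)) :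
    ∃ μ : List ℕ, (IsWord μ ∧ μ ≠ [] ∧ μ.head? ≠ some 1) ∧ wsum ω μ = x := by
  simp only [mem_iUnion] at hx
  obtain ⟨i, hi, _, ⟨ν, hν, rfl⟩, rfl⟩ := hx
  refine ⟨i :: ν, ⟨?_, List.cons_ne_nil _ _, by simp; omega⟩, by simp [wsum, add_comm]⟩
  intro j hj
  rcases List.mem_cons.1 hj with rfl | h
  · omega
  · exact hν j h

lemma zero_notMem_closure_biUnion_trSet_sgSet [TopologicalSpace Γ] [FrechetUrysohnSpace Γ]
    (hnoseq : ¬ ∃ μ : ℕ → List ℕ,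
      (∀ k, IsWord (μ k) ∧ μ k ≠ [] ∧ (μ k).head? ≠ some 1) ∧
        Tendsto (fun k => wsum ω (μ k)) atTop (𝓝 0)) :
    (0 : Γ) ∉ closure (⋃ i ≥ 2, trSet (sgSet ω) (ω i)) := fun h0 => by
  obtain ⟨u, hu, hlim⟩ := mem_closure_iff_seq_limit.1 h0
  choose μ hμ hμu using fun k => exists_word_of_mem_biUnion_trSet_sgSet (hu k)
  exact hnoseq ⟨μ, hμ, by simpa only [hμu] using hlim⟩

end Words

lemma HX_subset_closure_biUnion_trSet [Add Γ] [TopologicalSpace Γ] {ω : ℕ → Γ} {X : Set Γ}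
    (hX : X ⊆ trSet X (ω 1)) : HX ω X ⊆ closure (⋃ i ≥ 2, trSet X (ω i)) := by
  rintro x (hx | hx)
  · rw [sdiff_eq_empty.2 fun y hy => mem_iUnion₂_of_mem (le_refl 1) (hX hy), closure_empty] at hx
    exact hx.elim
  · exact mem_iInter₂.1 hx 2 (by norm_num)

lemma image_add_left_trSet [AddSemigroup Γ] (γ g : Γ) (S : Set Γ) :
    (γ + ·) '' trSet S g = trSet ((γ + ·) '' S) g := by
  simp only [trSet, image_image, add_assoc]

section TopologicalGroup

variable [AddGroup Γ] [TopologicalSpace Γ] [ContinuousAdd Γ]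

lemma trSet_closure (S : Set Γ) (g : Γ) : trSet (closure S) g = closure (trSet S g) :=
  (Homeomorph.addRight g).image_closure S

lemma closure_biUnion_trSet_closure_subset (ω : ℕ → Γ) (S : Set Γ) (n : ℕ) :
    closure (⋃ i ≥ n, trSet (closure S) (ω i)) ⊆ closure (⋃ i ≥ n, trSet S (ω i)) :=
  closure_minimal (iUnion₂_subset fun i hi => trSet_closure S (ω i) ▸
    closure_mono (subset_biUnion_of_mem (u := fun i => trSet S (ω i)) hi)) isClosed_closure

lemma closure_biUnion_trSet_image_add_closure_subset (ω : ℕ → Γ) (S : Set Γ) (γ : Γ) (n : ℕ) :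
    closure (⋃ i ≥ n, trSet ((γ + ·) '' closure S) (ω i)) ⊆
      (γ + ·) '' closure (⋃ i ≥ n, trSet S (ω i)) := by
  simp_rw [← image_add_left_trSet, ← image_iUnion₂]
  exact ((Homeomorph.addLeft γ).image_closure _).symm.subset.trans
    (image_mono (closure_biUnion_trSet_closure_subset ω S n))

end TopologicalGroup

theorem stmt13_general [AddCommGroup Γ] [TopologicalSpace Γ] [IsTopologicalAddGroup Γ]
    [SecondCountableTopology Γ]
    (ω : ℕ → Γ) (K : ℕ) (hK : 1 ≤ K) (hK0 : K • ω 1 = 0)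
    (hnoseq : ¬ ∃ μ : ℕ → List ℕ,
      (∀ k, IsWord (μ k) ∧ μ k ≠ [] ∧ (μ k).head? ≠ some 1) ∧
        Tendsto (fun k => wsum ω (μ k)) atTop (𝓝 0)) :
    ∀ γ : Γ, γ ∉ HX ω ((fun s => γ + s) '' closure (sgSet ω)) := by
  intro γ hγ
  have hX : (γ + ·) '' closure (sgSet ω) ⊆ trSet ((γ + ·) '' closure (sgSet ω)) (ω 1) := by
    rw [← image_add_left_trSet, trSet_closure]
    exact image_mono (closure_mono (sgSet_subset_trSet hK hK0))
  obtain ⟨x, hx, hγx⟩ :=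
    closure_biUnion_trSet_image_add_closure_subset ω (sgSet ω) γ 2
      (HX_subset_closure_biUnion_trSet hX hγ)
  obtain rfl : x = 0 := by simpa using hγx
  exact zero_notMem_closure_biUnion_trSet_sgSet hnoseq hx

theorem stmt13 [AddCommGroup Γ] [TopologicalSpace Γ] [IsTopologicalAddGroup Γ]
    [LocallyCompactSpace Γ] [SecondCountableTopology Γ] [T2Space Γ]
    (ω : ℕ → Γ) (K : ℕ) (hK : 1 ≤ K) (hK0 : K • ω 1 = 0)
    (hmin : ∀ m : ℕ, 1 ≤ m → m • ω 1 = 0 → K ≤ m)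
    (hnoseq : ¬ ∃ μ : ℕ → List ℕ,
      (∀ k, IsWord (μ k) ∧ μ k ≠ [] ∧ (μ k).head? ≠ some 1) ∧
        Tendsto (fun k => wsum ω (μ k)) atTop (𝓝 0)) :
    ∀ γ : Γ, γ ∉ HX ω ((fun s => γ + s) '' closure (sgSet ω)) :=
  stmt13_general ω K hK hK0 hnoseq
end

section
/- For any sequence $\omega$ in $\Gamma$, $\{0\} \cup H_{\overline{\mathrm{sg}}(\omega)} = \{0\} \cup \bigcap_{n=1}^\infty \overline{\bigcup_{i=n}^\infty (\mathrm{sg}(\omega) + \omega_i)}$. -/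
open Set Filter Topology

variable {Γ : Type*}

/-!
Translation by `ω i` is a homeomorphism, so replacing `sg(ω)` by its closure does not change
the tails `closure (⋃ i ≥ n, sg(ω) + ω i)`. The remaining part of `H_X` is the closure of the
points of `X = closure sg(ω)` not in any `X + ω i`. Such a point `x ≠ 0` is a limit of nonzero
elements of `sg(ω)`, each lying in some `sg(ω) + ω i`; since `x` avoids the finitely many closed
sets `X + ω i`, `i < n`, it must be a limit of the tail `⋃ i ≥ n, sg(ω) + ω i`.
-/

lemma mem_closure_of_subset_biUnion_union {ι X : Type*} [TopologicalSpace X] {s : Set ι}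
    (hs : s.Finite) {A C : Set X} {B : ι → Set X} {x : X} (hx : x ∈ closure A)
    (hA : A ⊆ (⋃ i ∈ s, B i) ∪ C) (hB : ∀ i ∈ s, x ∉ closure (B i)) : x ∈ closure C := by
  have hx' := closure_mono hA hx
  rw [closure_union, hs.closure_biUnion] at hx'
  rcases hx' with hxB | hxC
  · obtain ⟨i, hi, hxi⟩ := mem_iUnion₂.mp hxB
    exact absurd hxi (hB i hi)
  · exact hxC

lemma sgSet_subset_insert_iUnion_trSet [AddCommMonoid Γ] (ω : ℕ → Γ) :
    sgSet ω ⊆ insert 0 (⋃ i ≥ 1, trSet (sgSet ω) (ω i)) := by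
  rintro _ ⟨μ, hμ, rfl⟩
  cases μ with
  | nil => exact Or.inl rfl
  | cons j μ =>
    refine Or.inr (mem_iUnion₂.mpr ⟨j, hμ j List.mem_cons_self, wsum ω μ,
      ⟨μ, fun i hi => hμ i (List.mem_cons_of_mem _ hi), rfl⟩, ?_⟩)
    simp only [wsum, List.map_cons, List.sum_cons, add_comm]

section TopologicalAddGroup

variable [AddCommGroup Γ] [TopologicalSpace Γ] [IsTopologicalAddGroup Γ]

lemma closure_trSet (S : Set Γ) (g : Γ) : closure (trSet S g) = trSet (closure S) g :=
  ((Homeomorph.addRight g).image_closure S).symm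

lemma closure_iUnion_trSet_closure (S : Set Γ) (ω : ℕ → Γ) (n : ℕ) :
    closure (⋃ i ≥ n, trSet (closure S) (ω i)) = closure (⋃ i ≥ n, trSet S (ω i)) := by
  refine subset_antisymm (closure_minimal (iUnion₂_subset fun i hi => ?_) isClosed_closure)
    (closure_mono (iUnion₂_mono fun i _ => image_mono subset_closure))
  rw [← closure_trSet]
  exact closure_mono (subset_iUnion₂ (s := fun i (_ : i ≥ n) => trSet S (ω i)) i hi)

lemma mem_closure_iUnion_trSet_sgSet [T1Space Γ] (ω : ℕ → Γ) {x : Γ}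
    (hx : x ∈ closure (sgSet ω) \ ⋃ i ≥ 1, trSet (closure (sgSet ω)) (ω i)) (hx0 : x ≠ 0)
    (n : ℕ) : x ∈ closure (⋃ i ≥ n, trSet (sgSet ω) (ω i)) := by
  have hx' : x ∈ closure (sgSet ω \ {0}) := by
    have := isOpen_compl_singleton.inter_closure (t := sgSet ω) ⟨hx0, hx.1⟩
    rwa [inter_comm, ← sdiff_eq] at this
  refine mem_closure_of_subset_biUnion_union (finite_Ico 1 n) hx' (fun y ⟨hy, hy0⟩ => ?_)
    fun i hi hxi => hx.2 (mem_iUnion₂.mpr ⟨i, hi.1, closure_trSet (sgSet ω) (ω i) ▸ hxi⟩)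
  obtain ⟨i, hi, hyi⟩ := mem_iUnion₂.mp
    ((sgSet_subset_insert_iUnion_trSet ω hy).resolve_left hy0)
  rcases lt_or_ge i n with hin | hin
  · exact Or.inl (mem_biUnion ⟨hi, hin⟩ hyi)
  · exact Or.inr (mem_iUnion₂.mpr ⟨i, hin, hyi⟩)

end TopologicalAddGroup

theorem stmt15_general [AddCommGroup Γ] [TopologicalSpace Γ] [IsTopologicalAddGroup Γ]
    [T2Space Γ]
    (ω : ℕ → Γ) :
    {(0 : Γ)} ∪ HX ω (closure (sgSet ω)) =
      {(0 : Γ)} ∪ ⋂ n ≥ 1, closure (⋃ i ≥ n, trSet (sgSet ω) (ω i)) := by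
  set T := ⋂ n ≥ 1, closure (⋃ i ≥ n, trSet (sgSet ω) (ω i))
  have htail : ⋂ n ≥ 1, closure (⋃ i ≥ n, trSet (closure (sgSet ω)) (ω i)) = T :=
    iInter₂_congr fun n _ => closure_iUnion_trSet_closure (sgSet ω) ω n
  have hclosed : IsClosed ({(0 : Γ)} ∪ T) :=
    isClosed_singleton.union (isClosed_biInter fun _ _ => isClosed_closure)
  have hsdiff : closure (closure (sgSet ω) \ ⋃ i ≥ 1, trSet (closure (sgSet ω)) (ω i)) ⊆
      {(0 : Γ)} ∪ T := by
    refine closure_minimal (fun x hx => or_iff_not_imp_left.mpr fun hx0 => ?_) hclosed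
    exact mem_iInter₂.mpr fun n _ => mem_closure_iUnion_trSet_sgSet ω hx hx0 n
  rw [HX, htail, ← union_assoc, union_right_comm, union_eq_left.mpr hsdiff]

theorem stmt15 [AddCommGroup Γ] [TopologicalSpace Γ] [IsTopologicalAddGroup Γ]
    [LocallyCompactSpace Γ] [SecondCountableTopology Γ] [T2Space Γ]
    (ω : ℕ → Γ) :
    {(0 : Γ)} ∪ HX ω (closure (sgSet ω)) =
      {(0 : Γ)} ∪ ⋂ n ≥ 1, closure (⋃ i ≥ n, trSet (sgSet ω) (ω i)) :=
  stmt15_general ω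
end

section
/- Let $(X, X^{(\infty)})$ be an $\omega$-invariant pair. Then $X^{(\infty)} + (\{0\} \cup H_{\overline{\mathrm{sg}}(\omega)}) \subset X^{(\infty)}$ and $X + (\{0\} \cup H_{\overline{\mathrm{sg}}(\omega)}) \subset X$. In particular, for every $\gamma \in X$, $\gamma + \bigcap_{n=1}^\infty \overline{\bigcup_{i=n}^\infty (\mathrm{sg}(\omega)+\omega_i)} \subset X^{(\infty)}$. -/
open Set Filter Topology

variable {Γ : Type*}

/-!
Translating the words of `sg(ω)` by `γ ∈ X` stays inside `X`, so
`γ + (sg(ω) + ω i) ⊆ X + ω i` and `γ` carries the limit superior of the sets `sg(ω) + ω i`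
into that of the sets `X + ω i`, which lies in `H_X ⊆ X^∞`. It remains that
`H_{closure sg(ω)}` adds only `0` to this limit superior: a nonzero point of `closure sg(ω)`
outside each closed set `closure sg(ω) + ω i` can only be approximated from `sg(ω) + ω i`
with arbitrarily large `i`.
-/

/-- The second part of `H_X`: the topological limit superior of the translates `X + ω i`. -/
def trLimsup [Add Γ] [TopologicalSpace Γ] (ω : ℕ → Γ) (X : Set Γ) : Set Γ :=
  ⋂ n ≥ 1, closure (⋃ i ≥ n, trSet X (ω i))

lemma trLimsup_subset_HX [Add Γ] [TopologicalSpace Γ] (ω : ℕ → Γ) (X : Set Γ) :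
    trLimsup ω X ⊆ HX ω X :=
  subset_union_right

lemma add_wsum_mem [AddCommMonoid Γ] {ω : ℕ → Γ} {X : Set Γ}
    (hX : ∀ i, 1 ≤ i → trSet X (ω i) ⊆ X) {μ : List ℕ} (hμ : IsWord μ) {γ : Γ}
    (hγ : γ ∈ X) :
    γ + wsum ω μ ∈ X := by
  induction μ generalizing γ with
  | nil => simpa [wsum] using hγ
  | cons i μ ih =>
    have hγi : γ + ω i ∈ X := hX i (hμ i List.mem_cons_self) ⟨γ, hγ, rfl⟩
    have hrest := ih (fun j hj => hμ j (List.mem_cons_of_mem _ hj)) hγi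
    simpa only [wsum, List.map_cons, List.sum_cons, add_assoc] using hrest

lemma add_sgSet_mem [AddCommMonoid Γ] {ω : ℕ → Γ} {X : Set Γ}
    (hX : ∀ i, 1 ≤ i → trSet X (ω i) ⊆ X) {γ s : Γ} (hγ : γ ∈ X)
    (hs : s ∈ sgSet ω) :
    γ + s ∈ X := by
  obtain ⟨μ, hμ, rfl⟩ := hs
  exact add_wsum_mem hX hμ hγ

lemma add_mem_trLimsup [AddCommMonoid Γ] [TopologicalSpace Γ] [ContinuousAdd Γ]
    {ω : ℕ → Γ} {X : Set Γ} (hX : ∀ i, 1 ≤ i → trSet X (ω i) ⊆ X) {γ t : Γ}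
    (hγ : γ ∈ X) (ht : t ∈ trLimsup ω (sgSet ω)) : γ + t ∈ trLimsup ω X := by
  simp only [trLimsup, mem_iInter] at ht ⊢
  intro n hn
  have htrans :
      (γ + ·) '' ⋃ i ≥ n, trSet (sgSet ω) (ω i) ⊆ ⋃ i ≥ n, trSet X (ω i) := by
    simp only [image_iUnion₂, iUnion₂_subset_iff]
    rintro i hi _ ⟨_, ⟨s, hs, rfl⟩, rfl⟩
    exact mem_biUnion hi ⟨γ + s, add_sgSet_mem hX hγ hs, add_assoc γ s (ω i)⟩
  exact closure_mono htrans <|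
    image_closure_subset_closure_image (continuous_const_add γ) (mem_image_of_mem _ (ht n hn))

lemma trLimsup_closure_subset [AddCommMonoid Γ] [TopologicalSpace Γ] [ContinuousAdd Γ]
    (ω : ℕ → Γ) (X : Set Γ) : trLimsup ω (closure X) ⊆ trLimsup ω X := by
  refine biInter_mono subset_rfl fun n _ => closure_minimal ?_ isClosed_closure
  refine iUnion₂_subset fun i hi => ?_
  calc trSet (closure X) (ω i) ⊆ closure (trSet X (ω i)) :=
        image_closure_subset_closure_image (continuous_add_const (ω i))
    _ ⊆ closure (⋃ i ≥ n, trSet X (ω i)) :=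
        closure_mono (subset_iUnion₂_of_subset i hi subset_rfl)

lemma sgSet_subset_zero_union_trSet [AddCommMonoid Γ] (ω : ℕ → Γ) :
    sgSet ω ⊆ {0} ∪ ⋃ i ≥ 1, trSet (sgSet ω) (ω i) := by
  rintro _ ⟨_ | ⟨i, μ⟩, hμ, rfl⟩
  · exact Or.inl rfl
  · refine Or.inr (mem_biUnion (hμ i List.mem_cons_self) ⟨wsum ω μ, ?_, ?_⟩)
    · exact ⟨μ, fun j hj => hμ j (List.mem_cons_of_mem _ hj), rfl⟩
    · simp only [wsum, List.map_cons, List.sum_cons, add_comm]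

lemma mem_closure_iUnion_ge_of_notMem {X : Type*} [TopologicalSpace X] {A : ℕ → Set X} {x : X}
    (hx : x ∈ closure (⋃ i ≥ 1, A i)) (hA : ∀ i ≥ 1, x ∉ closure (A i)) (n : ℕ) :
    x ∈ closure (⋃ i ≥ n, A i) := by
  have hsplit : ⋃ i ≥ 1, A i ⊆ (⋃ i ∈ Ico 1 n, A i) ∪ ⋃ i ≥ n, A i := by
    refine iUnion₂_subset fun i hi => ?_
    rcases lt_or_ge i n with hin | hin
    · exact subset_union_of_subset_left
        (subset_biUnion_of_mem (show i ∈ Ico 1 n from ⟨hi, hin⟩)) _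
    · exact subset_union_of_subset_right (subset_biUnion_of_mem (show i ≥ n from hin)) _
  have := closure_mono hsplit hx
  -- the finitely many terms below `n` have closed union, which misses `x`
  rw [closure_union, (finite_Ico 1 n).closure_biUnion] at this
  refine this.resolve_left fun hfin => ?_
  obtain ⟨i, hi, hxi⟩ := mem_iUnion₂.1 hfin
  exact hA i hi.1 hxi

lemma HX_closure_sgSet_subset [AddCommGroup Γ] [TopologicalSpace Γ] [IsTopologicalAddGroup Γ]
    [T1Space Γ] (ω : ℕ → Γ) :
    HX ω (closure (sgSet ω)) ⊆ {0} ∪ trLimsup ω (sgSet ω) := by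
  have hclosure : ∀ i, closure (trSet (sgSet ω) (ω i)) = trSet (closure (sgSet ω)) (ω i) :=
    fun i => ((Homeomorph.addRight (ω i)).image_closure _).symm
  refine union_subset ?_ (trLimsup_closure_subset ω _ |>.trans subset_union_right)
  refine closure_minimal ?_ <|
    isClosed_singleton.union <| isClosed_biInter fun n _ => isClosed_closure
  rintro γ ⟨hγsg, hγnot⟩
  refine or_iff_not_imp_left.2 fun hγ0 => ?_
  have hγU : γ ∈ closure (⋃ i ≥ 1, trSet (sgSet ω) (ω i)) := by
    have := closure_mono (sgSet_subset_zero_union_trSet ω) hγsg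
    rw [closure_union, closure_singleton] at this
    exact this.resolve_left hγ0
  simp only [trLimsup, mem_iInter]
  refine fun n _ => mem_closure_iUnion_ge_of_notMem hγU (fun i hi hγi => ?_) n
  exact hγnot (mem_biUnion hi (hclosure i ▸ hγi))

lemma image2_add_zero_union_subset [AddZeroClass Γ] {Y S : Set Γ}
    (h : ∀ y ∈ Y, ∀ s ∈ S, y + s ∈ Y) : image2 (· + ·) Y ({0} ∪ S) ⊆ Y := by
  rintro _ ⟨y, hy, s, hs | hs, rfl⟩
  · rw [mem_singleton_iff.1 hs]
    simpa using hy
  · exact h y hy s hs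

theorem stmt16_general [AddCommGroup Γ] [TopologicalSpace Γ] [IsTopologicalAddGroup Γ]
    [T2Space Γ]
    (ω : ℕ → Γ) (X Xinf : Set Γ) (h : OmegaInvPair ω X Xinf) :
    Set.image2 (· + ·) Xinf ({(0 : Γ)} ∪ HX ω (closure (sgSet ω))) ⊆ Xinf ∧
      Set.image2 (· + ·) X ({(0 : Γ)} ∪ HX ω (closure (sgSet ω))) ⊆ X ∧
      ∀ γ ∈ X,
        (fun s => γ + s) '' (⋂ n ≥ 1, closure (⋃ i ≥ n, trSet (sgSet ω) (ω i)))
          ⊆ Xinf := by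
  obtain ⟨⟨-, hXinv⟩, -, hHX, hXinfX⟩ := h
  have hT : ∀ γ ∈ X, ∀ t ∈ trLimsup ω (sgSet ω), γ + t ∈ Xinf := fun γ hγ t ht =>
    hHX <| trLimsup_subset_HX ω X <| add_mem_trLimsup hXinv hγ ht
  have hH : {(0 : Γ)} ∪ HX ω (closure (sgSet ω)) ⊆ {0} ∪ trLimsup ω (sgSet ω) :=
    union_subset subset_union_left (HX_closure_sgSet_subset ω)
  refine ⟨?_, ?_, fun γ hγ => image_subset_iff.2 fun t ht => hT γ hγ t ht⟩
  · refine (image2_subset_left hH).trans (image2_add_zero_union_subset ?_)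
    exact fun γ hγ t ht => hT γ (hXinfX hγ) t ht
  · refine (image2_subset_left hH).trans (image2_add_zero_union_subset ?_)
    exact fun γ hγ t ht => hXinfX (hT γ hγ t ht)

theorem stmt16 [AddCommGroup Γ] [TopologicalSpace Γ] [IsTopologicalAddGroup Γ]
    [LocallyCompactSpace Γ] [SecondCountableTopology Γ] [T2Space Γ]
    (ω : ℕ → Γ) (X Xinf : Set Γ) (h : OmegaInvPair ω X Xinf) :
    Set.image2 (· + ·) Xinf ({(0 : Γ)} ∪ HX ω (closure (sgSet ω))) ⊆ Xinf ∧
      Set.image2 (· + ·) X ({(0 : Γ)} ∪ HX ω (closure (sgSet ω))) ⊆ X ∧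
      ∀ γ ∈ X,
        (fun s => γ + s) '' (⋂ n ≥ 1, closure (⋃ i ≥ n, trSet (sgSet ω) (ω i)))
          ⊆ Xinf :=
  stmt16_general ω X Xinf h
end

section
/- Suppose the closed subgroup of $\Gamma$ generated by $\{\omega_i\}_{i \geq 1}$ equals $\Gamma$. Then $\Gamma$ is a prime $\omega$-invariant set. Conversely, if $\Gamma$ is a prime $\omega$-invariant set, then the closed group generated by $\{\omega_i\}$ is $\Gamma$. -/
open Set Filter Topology

variable {Γ : Type*}

/-!
Translation by an element of the semigroup
`sg(ω) = AddSubmonoid.closure (ω '' {i | 1 ≤ i})` preserves every ω-invariant set, and the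
subgroup generated by the `ω i` consists of the differences `s - t` with `s, t ∈ sg(ω)`.

If this subgroup is dense and `Γ ⊆ X₁ ∪ X₂` with points `a ∉ X₁`, `b ∉ X₂`, density gives
`s - t` with `a + (s - t) ∉ X₂` (as `X₂ᶜ` is an open neighbourhood of `b`); then `a - t` lies in
neither `X₁` (else so would `a`) nor `X₂` (else so would `a - t + s`).

Conversely, for open `U` the set of `γ` with `(γ + sg(ω)) ∩ U = ∅` is ω-invariant, so primeness
of `Γ` yields, for open `U₁ ∋ γ₁`, `U₂ ∋ γ₂`, some `γ` and `s₁, s₂ ∈ sg(ω)` with `γ + sᵢ ∈ Uᵢ`.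
With `U₁ ∋ 0` and `U₂` around a given point `γ₂` such that `U₂ - U₁ ⊆ U`, the subgroup element
`s₂ - s₁` lies in `U`.
-/

theorem OmegaInv.add_mem [AddCommMonoid Γ] [TopologicalSpace Γ] {ω : ℕ → Γ} {X : Set Γ}
    (hX : OmegaInv ω X) {x s : Γ} (hx : x ∈ X)
    (hs : s ∈ AddSubmonoid.closure (ω '' {i | 1 ≤ i})) : x + s ∈ X := by
  induction hs using AddSubmonoid.closure_induction generalizing x with
  | mem _ h =>
    obtain ⟨i, hi, rfl⟩ := h
    exact hX.2 i hi ⟨x, hx, rfl⟩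
  | zero => simpa using hx
  | add s t _ _ hs ht => simpa [add_assoc] using ht (hs hx)

theorem AddSubgroup.exists_sub_of_mem_closure [AddCommGroup Γ] {S : Set Γ} {g : Γ}
    (hg : g ∈ AddSubgroup.closure S) :
    ∃ s ∈ AddSubmonoid.closure S, ∃ t ∈ AddSubmonoid.closure S, g = s - t := by
  rw [← AddSubgroup.mem_toAddSubmonoid, AddSubgroup.closure_toAddSubmonoid,
    AddSubmonoid.closure_union, AddSubmonoid.mem_sup] at hg
  obtain ⟨s, hs, t, ht, rfl⟩ := hg
  exact ⟨s, hs, -t, (AddSubmonoid.mem_closure_neg S t).1 ht, by rw [sub_neg_eq_add]⟩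

section

variable [AddCommGroup Γ] [TopologicalSpace Γ] {ω : ℕ → Γ}

theorem primeCond_univ_of_dense [ContinuousAdd Γ]
    (hd : Dense (AddSubgroup.closure (ω '' {i | 1 ≤ i}) : Set Γ)) : PrimeCond ω univ := by
  intro X₁ X₂ h₁ h₂ hcov
  by_contra! hne
  obtain ⟨⟨a, -, ha⟩, ⟨b, -, hb⟩⟩ := And.imp not_subset.1 not_subset.1 hne
  have hopen : IsOpen ((a + ·) ⁻¹' X₂ᶜ) := h₂.1.isOpen_compl.preimage (continuous_const_add a)
  obtain ⟨g, hg, hag⟩ := hd.exists_mem_open hopen ⟨b - a, by simpa using hb⟩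
  obtain ⟨s, hs, t, ht, rfl⟩ := AddSubgroup.exists_sub_of_mem_closure hg
  rcases hcov (mem_univ (a - t)) with hat | hat
  · exact ha (by simpa using h₁.add_mem hat ht)
  · have hats := h₂.add_mem hat hs
    rw [sub_add_eq_add_sub, add_sub_assoc] at hats
    exact hag hats

theorem OmegaInv.setOf_forall_add_notMem [ContinuousAdd Γ] {U : Set Γ} (hU : IsOpen U) :
    OmegaInv ω {γ | ∀ s ∈ AddSubmonoid.closure (ω '' {i | 1 ≤ i}), γ + s ∉ U} := by
  refine ⟨?_, ?_⟩
  · simp only [ofPred_forall]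
    exact isClosed_biInter fun s _ => hU.isClosed_compl.preimage (continuous_add_const s)
  · rintro i hi _ ⟨γ, hγ, rfl⟩ s hs
    rw [add_assoc]
    exact hγ _ ((AddSubmonoid.closure _).add_mem (AddSubmonoid.subset_closure ⟨i, hi, rfl⟩) hs)

theorem PrimeCond.exists_add_mem_of_isOpen [ContinuousAdd Γ] (hp : PrimeCond ω univ)
    {U₁ U₂ : Set Γ} (hU₁ : IsOpen U₁) (hU₂ : IsOpen U₂) {γ₁ γ₂ : Γ} (h₁ : γ₁ ∈ U₁)
    (h₂ : γ₂ ∈ U₂) :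
    ∃ γ, ∃ s₁ ∈ AddSubmonoid.closure (ω '' {i | 1 ≤ i}),
      ∃ s₂ ∈ AddSubmonoid.closure (ω '' {i | 1 ≤ i}), γ + s₁ ∈ U₁ ∧ γ + s₂ ∈ U₂ := by
  by_contra! hcon
  have hcov : univ ⊆ {γ | ∀ s ∈ AddSubmonoid.closure (ω '' {i | 1 ≤ i}), γ + s ∉ U₁} ∪
      {γ | ∀ s ∈ AddSubmonoid.closure (ω '' {i | 1 ≤ i}), γ + s ∉ U₂} := by
    intro γ _
    simp only [mem_union, mem_ofPred_eq]
    by_contra! h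
    obtain ⟨⟨s₁, hs₁, hγ₁⟩, ⟨s₂, hs₂, hγ₂⟩⟩ := h
    exact hcon γ s₁ hs₁ s₂ hs₂ hγ₁ hγ₂
  rcases hp _ _ (.setOf_forall_add_notMem hU₁) (.setOf_forall_add_notMem hU₂) hcov with h | h
  · exact h (mem_univ γ₁) 0 (zero_mem _) (by simpa using h₁)
  · exact h (mem_univ γ₂) 0 (zero_mem _) (by simpa using h₂)

theorem dense_of_primeCond_univ [IsTopologicalAddGroup Γ] (hp : PrimeCond ω univ) :
    Dense (AddSubgroup.closure (ω '' {i | 1 ≤ i}) : Set Γ) := by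
  intro γ
  rw [mem_closure_iff]
  intro U hU hγU
  have hsub : IsOpen ((fun p : Γ × Γ => p.1 - p.2) ⁻¹' U) :=
    hU.preimage (continuous_fst.sub continuous_snd)
  obtain ⟨V₁, V₂, hV₁, hV₂, hγV₁, h0V₂, hV⟩ :=
    isOpen_prod_iff.1 hsub γ 0 (by simpa using hγU)
  obtain ⟨x, s₂, hs₂, s₁, hs₁, hx₂, hx₁⟩ := hp.exists_add_mem_of_isOpen hV₂ hV₁ h0V₂ hγV₁
  refine ⟨s₁ - s₂, ?_, sub_mem (AddSubgroup.le_closure_toAddSubmonoid _ hs₁)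
    (AddSubgroup.le_closure_toAddSubmonoid _ hs₂)⟩
  simpa using hV (mk_mem_prod hx₁ hx₂)

end

theorem stmt18_general [AddCommGroup Γ] [TopologicalSpace Γ] [IsTopologicalAddGroup Γ]
    (ω : ℕ → Γ) :
    closure ((AddSubgroup.closure (ω '' {i | 1 ≤ i}) : AddSubgroup Γ) : Set Γ)
        = Set.univ ↔ PrimeCond ω Set.univ := by
  rw [← dense_iff_closure_eq]
  exact ⟨primeCond_univ_of_dense, dense_of_primeCond_univ⟩

theorem stmt18 [AddCommGroup Γ] [TopologicalSpace Γ] [IsTopologicalAddGroup Γ]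
    [LocallyCompactSpace Γ] [SecondCountableTopology Γ] [T2Space Γ]
    (ω : ℕ → Γ) :
    closure ((AddSubgroup.closure (ω '' {i | 1 ≤ i}) : AddSubgroup Γ) : Set Γ)
        = Set.univ ↔ PrimeCond ω Set.univ :=
  stmt18_general ω
end
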